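/- (Contrapositive form of Proposition 2, outward-moving case.) Let x ∈ M, let U be an open neighborhood of x, and let N₁, …, N_m ∈ ℝ³ be linearly independent vectors such that M ∩ U = (⋂_{i=1}^m {y ∈ ℝ³ : ⟨N_i, y − x⟩ ≤ 0}) ∩ U. Assume A and b are continuous on ℝ and differentiable at t' ∈ I, and set v = γ_x'(t'). If t₀ ≤ t' < t₁ and ⟨A(t')·N_i, v⟩ > 0 for every i = 1, …, m, then γ_x(t') lies in the interior of the swept volume V = ⋃_{t∈I} M(t); in particular γ_x(t') is not on the envelope E. -/

import Mathlib

open RealInnerProductSpace Matrix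

/-- The action of a matrix on a point of `ℝ³ = EuclideanSpace ℝ (Fin 3)`. -/
noncomputable def act (A : Matrix (Fin 3) (Fin 3) ℝ) (x : EuclideanSpace ℝ (Fin 3)) :
    EuclideanSpace ℝ (Fin 3) := Matrix.toEuclideanLin A x

/-! Pull `p = γ_x(t')` back into body coordinates, `y(t) = A(t)ᵀ (p - b(t))`, so that
`p ∈ M(t) ↔ y(t) ∈ M`. As `A(t)` is orthogonal, `⟪N i, y(t) - x⟫ = ⟪A(t) N i, γ_x(t') - γ_x(t)⟫`,
which is `-(t - t') ⟪A(t') N i, v⟫ + o(t - t') < 0` for `t` slightly after `t'`. Then `y(t)` lies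
in the open set `U ∩ ⋂ i, {⟪N i, · - x⟫ < 0} ⊆ M`, whose image under the motion at time `t` is
an open neighbourhood of `p` inside the swept volume. -/

open Filter Topology Set

lemma act_mul (A B : Matrix (Fin 3) (Fin 3) ℝ) (x : EuclideanSpace ℝ (Fin 3)) :
    act (A * B) x = act A (act B x) := by
  simp [act, Matrix.toLpLin_apply, Matrix.mulVec_mulVec]

lemma act_one (x : EuclideanSpace ℝ (Fin 3)) : act 1 x = x := by
  simp [act]

lemma act_add (A : Matrix (Fin 3) (Fin 3) ℝ) (x y : EuclideanSpace ℝ (Fin 3)) :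
    act A (x + y) = act A x + act A y :=
  map_add _ x y

lemma act_zero (A : Matrix (Fin 3) (Fin 3) ℝ) : act A 0 = 0 :=
  map_zero _

lemma inner_act_transpose (A : Matrix (Fin 3) (Fin 3) ℝ) (x y : EuclideanSpace ℝ (Fin 3)) :
    ⟪x, act Aᵀ y⟫ = ⟪act A x, y⟫ := by
  rw [act, ← conjTranspose_eq_transpose_of_trivial, toEuclideanLin_conjTranspose_eq_adjoint,
    LinearMap.adjoint_inner_right]
  rfl

@[fun_prop]
lemma ContinuousAt.act {X : Type*} [TopologicalSpace X] {f : X → Matrix (Fin 3) (Fin 3) ℝ}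
    {g : X → EuclideanSpace ℝ (Fin 3)} {z : X} (hf : ContinuousAt f z) (hg : ContinuousAt g z) :
    ContinuousAt (fun z => act (f z) (g z)) z := by
  simp only [_root_.act, Matrix.toLpLin_apply]
  fun_prop

@[fun_prop]
lemma Continuous.act {X : Type*} [TopologicalSpace X] {f : X → Matrix (Fin 3) (Fin 3) ℝ}
    {g : X → EuclideanSpace ℝ (Fin 3)} (hf : Continuous f) (hg : Continuous g) :
    Continuous fun z => act (f z) (g z) :=
  continuous_iff_continuousAt.mpr fun _ => hf.continuousAt.act hg.continuousAt

section RigidMotion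

variable {A : Matrix (Fin 3) (Fin 3) ℝ}

lemma act_transpose_act (hA : Aᵀ * A = 1) (x : EuclideanSpace ℝ (Fin 3)) :
    act Aᵀ (act A x) = x := by
  rw [← act_mul, hA, act_one]

lemma act_act_transpose (hA : Aᵀ * A = 1) (x : EuclideanSpace ℝ (Fin 3)) :
    act A (act Aᵀ x) = x := by
  rw [← act_mul, mul_eq_one_comm.mp hA, act_one]

lemma isOpenMap_act_add (hA : Aᵀ * A = 1) (c : EuclideanSpace ℝ (Fin 3)) :
    IsOpenMap fun y => act A y + c :=
  IsOpenMap.of_inverse (f' := fun z => act Aᵀ (z - c))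
    (by fun_prop)
    (fun z => by simp only [act_act_transpose hA, sub_add_cancel])
    (fun y => by simp only [add_sub_cancel_right, act_transpose_act hA])

end RigidMotion

lemma mem_interior_sweep {A : ℝ → Matrix (Fin 3) (Fin 3) ℝ} {b : ℝ → EuclideanSpace ℝ (Fin 3)}
    {t : ℝ} (hA : (A t)ᵀ * A t = 1) {M O : Set (EuclideanSpace ℝ (Fin 3))} (hO : IsOpen O)
    (hOM : O ⊆ M) {I : Set ℝ} (ht : t ∈ I) {w : EuclideanSpace ℝ (Fin 3)} (hw : w ∈ O) :
    act (A t) w + b t ∈ interior (⋃ s ∈ I, (fun y => act (A s) y + b s) '' M) :=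
  interior_maximal (fun _ hz => mem_biUnion ht (image_mono hOM hz))
    (isOpenMap_act_add hA (b t) O hO) (mem_image_of_mem _ hw)

lemma eventually_pos_inner_sub_of_hasDerivAt {F : Type*} [NormedAddCommGroup F]
    [InnerProductSpace ℝ F] {g γ : ℝ → F} {v : F} {t : ℝ} (hg : ContinuousAt g t)
    (hγ : HasDerivAt γ v t) (hpos : 0 < ⟪g t, v⟫) :
    ∀ᶠ s in 𝓝[>] t, 0 < ⟪g s, γ s - γ t⟫ := by
  have hslope : Tendsto (fun s => ⟪g s, slope γ t s⟫) (𝓝[>] t) (𝓝 ⟪g t, v⟫) :=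
    (hg.tendsto.mono_left nhdsWithin_le_nhds).inner
      ((hasDerivAt_iff_tendsto_slope.mp hγ).mono_left (nhdsGT_le_nhdsNE t))
  filter_upwards [hslope.eventually_const_lt hpos, self_mem_nhdsWithin] with s hs hts
  rw [slope_def_module, inner_smul_right] at hs
  exact pos_of_mul_pos_right hs (inv_nonneg.mpr (sub_nonneg.mpr (le_of_lt hts)))

lemma isOpen_inter_iInter_strict_halfspace {E ι : Type*} [NormedAddCommGroup E]
    [InnerProductSpace ℝ E] [Finite ι] {U : Set E} (hU : IsOpen U) (N : ι → E) (x : E) :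
    IsOpen (U ∩ ⋂ i, {z | ⟪N i, z - x⟫ < 0}) :=
  hU.inter (isOpen_iInter_of_finite fun i => isOpen_lt (by fun_prop) continuous_const)

theorem interior_of_sweep_of_outward_moving_general
    (A : ℝ → Matrix (Fin 3) (Fin 3) ℝ) (b : ℝ → EuclideanSpace ℝ (Fin 3))
    (hA : ∀ t, (A t)ᵀ * A t = 1)
    (hAcont : Continuous A)
    (M : Set (EuclideanSpace ℝ (Fin 3)))
    (t₀ t₁ : ℝ)
    (x : EuclideanSpace ℝ (Fin 3))
    (U : Set (EuclideanSpace ℝ (Fin 3))) (hU : IsOpen U) (hxU : x ∈ U)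
    (m : ℕ) (N : Fin m → EuclideanSpace ℝ (Fin 3))
    (hMU : M ∩ U = (⋂ i, {y : EuclideanSpace ℝ (Fin 3) | ⟪N i, y - x⟫ ≤ 0}) ∩ U)
    (t' : ℝ) (ht'₀ : t₀ ≤ t') (ht'₁ : t' < t₁)
    (v : EuclideanSpace ℝ (Fin 3))
    (hv : HasDerivAt (fun t => act (A t) x + b t) v t')
    (hout : ∀ i, 0 < ⟪act (A t') (N i), v⟫) :
    act (A t') x + b t' ∈
        interior (⋃ t ∈ Set.Icc t₀ t₁, (fun y => act (A t) y + b t) '' M) ∧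
      act (A t') x + b t' ∉
        frontier (⋃ t ∈ Set.Icc t₀ t₁, (fun y => act (A t) y + b t) '' M) := by
  let p := act (A t') x + b t'
  -- `y t = act (A t)ᵀ (p - b t)`, written so that `y t - x` is `act (A t)ᵀ (p - γ_x t)`.
  let y t := x + act (A t)ᵀ (p - (act (A t) x + b t))
  let O := U ∩ ⋂ i, {z | ⟪N i, z - x⟫ < 0}
  have hOM : O ⊆ M := fun z hz =>
    (hMU ▸ ⟨mem_iInter.mpr fun i => mem_ofPred.mpr (mem_iInter.mp hz.2 i).le, hz.1⟩ :
      z ∈ M ∩ U).1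
  have hyU : ∀ᶠ t in 𝓝[>] t', y t ∈ U := by
    have hγ := hv.continuousAt
    have hy : ContinuousAt y t' := by fun_prop
    exact (hy.mono_left nhdsWithin_le_nhds)
      (hU.mem_nhds (by simpa only [y, p, sub_self, act_zero, add_zero]))
  have hyN : ∀ i, ∀ᶠ t in 𝓝[>] t', ⟪N i, y t - x⟫ < 0 := fun i => by
    have hAN : ContinuousAt (fun t => act (A t) (N i)) t' := by fun_prop
    filter_upwards [eventually_pos_inner_sub_of_hasDerivAt hAN hv (hout i)] with t ht
    rw [add_sub_cancel_left, inner_act_transpose, ← neg_sub, inner_neg_right]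
    exact neg_neg_of_pos ht
  have hI : ∀ᶠ t in 𝓝[>] t', t ∈ Ioc t' t₁ := Ioc_mem_nhdsGT ht'₁
  obtain ⟨t, ht, hyt⟩ := (hI.and (hyU.and (eventually_all.mpr hyN))).exists
  have hp : act (A t) (y t) + b t = p := by
    rw [act_add, act_act_transpose (hA t)]
    abel
  have hint : p ∈ interior (⋃ t ∈ Icc t₀ t₁, (fun y => act (A t) y + b t) '' M) := by
    rw [← hp]
    exact mem_interior_sweep (hA t) (isOpen_inter_iInter_strict_halfspace hU N x) hOM
      (Ioc_subset_Icc_self.trans (Icc_subset_Icc_left ht'₀) ht) ⟨hyt.1, mem_iInter.mpr hyt.2⟩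
  exact ⟨hint, disjoint_left.mp disjoint_interior_frontier hint⟩

/-- Contrapositive form of Proposition 2, outward-moving case: if near `x ∈ M` the solid
is the intersection of `m` half-spaces with linearly independent outward normals `N i`,
`t₀ ≤ t' < t₁` and `⟪A(t')·N i, γ_x'(t')⟫ > 0` for every `i`, then `γ_x(t')` lies in the
interior of the swept volume; in particular it is not on the envelope. -/
theorem interior_of_sweep_of_outward_moving
    (A : ℝ → Matrix (Fin 3) (Fin 3) ℝ) (b : ℝ → EuclideanSpace ℝ (Fin 3))
    (hA : ∀ t, (A t)ᵀ * A t = 1)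
    (hAcont : Continuous A) (hbcont : Continuous b)
    (M : Set (EuclideanSpace ℝ (Fin 3)))
    (t₀ t₁ : ℝ) (ht : t₀ < t₁)
    (x : EuclideanSpace ℝ (Fin 3)) (hxM : x ∈ M)
    (U : Set (EuclideanSpace ℝ (Fin 3))) (hU : IsOpen U) (hxU : x ∈ U)
    (m : ℕ) (N : Fin m → EuclideanSpace ℝ (Fin 3)) (hNli : LinearIndependent ℝ N)
    (hMU : M ∩ U = (⋂ i, {y : EuclideanSpace ℝ (Fin 3) | ⟪N i, y - x⟫ ≤ 0}) ∩ U)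
    (t' : ℝ) (ht'₀ : t₀ ≤ t') (ht'₁ : t' < t₁)
    (hAdiff : ∀ i j, DifferentiableAt ℝ (fun t => A t i j) t')
    (hbdiff : DifferentiableAt ℝ b t')
    (v : EuclideanSpace ℝ (Fin 3))
    (hv : HasDerivAt (fun t => act (A t) x + b t) v t')
    (hout : ∀ i, 0 < ⟪act (A t') (N i), v⟫) :
    act (A t') x + b t' ∈
        interior (⋃ t ∈ Set.Icc t₀ t₁, (fun y => act (A t) y + b t) '' M) ∧
      act (A t') x + b t' ∉
        frontier (⋃ t ∈ Set.Icc t₀ t₁, (fun y => act (A t) y + b t) '' M) :=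
  interior_of_sweep_of_outward_moving_general A b hA hAcont M t₀ t₁ x U hU hxU m N hMU t' ht'₀ ht'₁
    v hv hout
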